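/- In ℂ[x,y], if p ≥ 0 and q > 0 are coprime integers and λ1/λ2 = -p/q, then every first integral of λ1·x ∂/∂x + λ2·y ∂/∂y is a polynomial function of x^q y^p. -/

import Mathlib

/-! A first integral is supported on monomials `x^a y^b` of eigenvalue `a λ₁ + b λ₂ = 0`.
Since `q λ₁ = -p λ₂` with `λ₂ ≠ 0`, this forces `q b = p a`, and coprimality gives
`(a, b) = k (q, p)`, i.e. `x^a y^b = (x^q y^p)^k`. -/

open MvPolynomial

namespace MvPolynomial

variable {R σ : Type*} [CommSemiring R]

theorem coeff_X_mul_pderiv (i : σ) (f : MvPolynomial σ R) (m : σ →₀ ℕ) :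
    coeff m (X i * pderiv i f) = m i * coeff m f := by
  classical
  induction f using MvPolynomial.induction_on' with
  | monomial n a =>
    rw [X_mul_pderiv_monomial, coeff_smul, coeff_monomial, nsmul_eq_mul]
    split_ifs with h
    · rw [h]
    · simp
  | add f g hf hg => simp only [mul_add, map_add, coeff_add, hf, hg]

theorem sum_mul_eq_zero_of_sum_smul_X_mul_pderiv_eq_zero [NoZeroDivisors R] [Fintype σ]
    {l : σ → R} {f : MvPolynomial σ R} (hf : ∑ i, l i • (X i * pderiv i f) = 0)
    {m : σ →₀ ℕ} (hm : m ∈ f.support) : ∑ i, l i * m i = 0 := by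
  have hcoeff : (∑ i, l i * m i) * coeff m f = 0 := by
    simpa only [coeff_sum, coeff_smul, coeff_X_mul_pderiv, smul_eq_mul, Finset.sum_mul, mul_assoc,
      coeff_zero] using congrArg (coeff m) hf
  exact (mul_eq_zero.mp hcoeff).resolve_right (mem_support_iff.mp hm)

theorem mem_range_aeval_monomial_of_forall_mem_support (n : σ →₀ ℕ) {f : MvPolynomial σ R}
    (hf : ∀ m ∈ f.support, ∃ k : ℕ, m = k • n) :
    f ∈ (Polynomial.aeval (R := R) (monomial n (1 : R))).range := by
  rw [f.as_sum]
  refine Subalgebra.sum_mem _ fun m hm => ?_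
  obtain ⟨k, rfl⟩ := hf m hm
  refine ⟨Polynomial.C (coeff (k • n) f) * Polynomial.X ^ k, ?_⟩
  simp [monomial_pow, C_mul_monomial]

end MvPolynomial

theorem Nat.Coprime.exists_eq_mul_of_mul_eq_mul {p q a b : ℕ} (hpq : p.Coprime q) (hq : 0 < q)
    (h : q * b = p * a) : ∃ k, a = q * k ∧ b = p * k := by
  obtain ⟨k, rfl⟩ := hpq.symm.dvd_of_dvd_mul_left ⟨b, h.symm⟩
  refine ⟨k, rfl, Nat.eq_of_mul_eq_mul_left hq ?_⟩
  rw [h, Nat.mul_left_comm]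

theorem mul_eq_mul_of_eigenvalue_eq_zero {K : Type*} [Field K] [CharZero K] {p q a b : ℕ}
    {l1 l2 : K} (hl2 : l2 ≠ 0) (hslope : (q : K) * l1 + (p : K) * l2 = 0)
    (h : l1 * a + l2 * b = 0) : q * b = p * a := by
  have : l2 * ((q : K) * b - p * a) = 0 := by linear_combination (q : K) * h - (a : K) * hslope
  exact_mod_cast sub_eq_zero.mp ((mul_eq_zero.mp this).resolve_left hl2)

/-- In ℂ[x,y], if p ≥ 0 and q > 0 are coprime and λ₁/λ₂ = -p/q (λ₂ ≠ 0), then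
every element of the kernel of λ₁·x ∂/∂x + λ₂·y ∂/∂y — in particular every
first integral — is a polynomial in x^q y^p. -/
theorem first_integrals_are_polynomials_in_monomial
    (p q : ℕ) (hq : 0 < q) (hpq : Nat.Coprime p q)
    (l1 l2 : ℂ) (hl2 : l2 ≠ 0) (hslope : (q : ℂ) * l1 + (p : ℂ) * l2 = 0)
    (f : MvPolynomial (Fin 2) ℂ)
    (hf : l1 • (X 0 * pderiv 0 f) + l2 • (X 1 * pderiv 1 f) = 0) :
    ∃ g : Polynomial ℂ, f = Polynomial.aeval ((X 0) ^ q * (X 1) ^ p) g := by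
  have hmonomial : (X 0 ^ q * X 1 ^ p : MvPolynomial (Fin 2) ℂ) =
      monomial (Finsupp.single 0 q + Finsupp.single 1 p) 1 := by
    rw [monomial_single_add, ← X_pow_eq_monomial]
  have hsupport :
      ∀ m ∈ f.support, ∃ k : ℕ, m = k • (Finsupp.single 0 q + Finsupp.single 1 p) := by
    intro m hm
    have hweight := sum_mul_eq_zero_of_sum_smul_X_mul_pderiv_eq_zero (l := ![l1, l2])
      (by simpa [Fin.sum_univ_two] using hf) hm
    rw [Fin.sum_univ_two] at hweight
    obtain ⟨k, h0, h1⟩ :=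
      hpq.exists_eq_mul_of_mul_eq_mul hq (mul_eq_mul_of_eigenvalue_eq_zero hl2 hslope hweight)
    refine ⟨k, Finsupp.ext fun j => ?_⟩
    fin_cases j <;> simp [h0, h1, mul_comm]
  obtain ⟨g, hg⟩ := mem_range_aeval_monomial_of_forall_mem_support _ hsupport
  exact ⟨g, by rw [hmonomial]; exact hg.symm⟩
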